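/- Let m ≥ 1 and τ ∈ ℂ. Let U be an n×n complex unitary matrix with n ≥ 1 such that U^m = τ·1, let α : Fin m → ℂ, and suppose V := Σ_{i=0}^{m−1} α_i U^i is unitary. Then there exists β : Fin m → ℂ such that V = Σ_{i=0}^{m−1} β_i U^i and the τ-twisted circulant matrix C(τ, β) is unitary. -/

import Mathlib

open Matrix

/-- The τ-twisted circulant matrix: entry (k, j) equals τ·β_{(j−k) mod m} if j < k,
and β_{(j−k) mod m} if j ≥ k (Fin subtraction is subtraction mod m). -/
def twistedCirculant (m : ℕ) (τ : ℂ) (β : Fin m → ℂ) : Matrix (Fin m) (Fin m) ℂ :=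
  fun k j => if (j : ℕ) < (k : ℕ) then τ * β (j - k) else β (j - k)

/-!
Write `p_β = ∑ β_i X ^ i`. Then `V = p_α(U)` and `C(τ, β) = p_β(T)`, where `T` is the twisted
cyclic shift, so both sides live in the functional calculus of a unitary `u` with `u ^ m = τ`.
For such `u` we have `|τ| = 1` and `u⋆ = τ̄ u ^ (m - 1)`, so `p(u)⋆ = p†(u)` for a polynomial `p†`
with `p†(x) = conj (p x)` at every `m`-th root `x` of `τ`. The minimal polynomial of `u` divides
the separable polynomial `X ^ m - τ`, hence `p(u) = 0` iff `p` vanishes at its roots, and `p(u)` is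
unitary iff `|p| = 1` at these roots. For `T` they are all `m`-th roots of `τ`; for `U` only some of
them, and there `|p_α| = 1`. Lagrange interpolation gives `p_β` of degree `< m` that agrees with
`p_α` at the roots belonging to `U` and equals `1` at the other `m`-th roots of `τ`.
-/

open Polynomial ComplexConjugate

namespace Polynomial

theorem Separable.dvd_iff_forall_isRoot {K : Type*} [Field K] [IsAlgClosed K] {f q : K[X]}
    (hf : f.Separable) :
    f ∣ q ↔ ∀ x ∈ f.roots, q.IsRoot x := by
  refine ⟨fun hfq x hx => (isRoot_of_mem_roots hx).dvd hfq, fun h => ?_⟩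
  rcases eq_or_ne q 0 with rfl | hq
  · exact dvd_zero f
  refine (IsAlgClosed.splits f).dvd_of_roots_le_roots hf.ne_zero ?_
  exact (Multiset.le_iff_subset (nodup_roots hf)).2 fun x hx => (mem_roots hq).2 (h x hx)

theorem exists_natDegree_lt_forall_eval_eq {K : Type*} [Field K] {m : ℕ} (hm : 0 < m) (τ : K)
    (g : K → K) : ∃ r : K[X], r.natDegree < m ∧ ∀ x, x ^ m = τ → r.eval x = g x := by
  classical
  set s := nthRootsFinset m τ
  refine ⟨Lagrange.interpolate s id g, ?_, fun x hx => ?_⟩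
  · rcases eq_or_ne (Lagrange.interpolate s id g) 0 with h | h
    · rw [h, natDegree_zero]; exact hm
    rw [natDegree_lt_iff_degree_lt h]
    refine (Lagrange.degree_interpolate_lt _ (Set.injOn_id _)).trans_le ?_
    exact_mod_cast (Multiset.toFinset_card_le _).trans (card_nthRoots m τ)
  · exact Lagrange.eval_interpolate_at_node g (Set.injOn_id _) ((mem_nthRootsFinset hm τ).2 hx)

theorem aeval_eq_sum_fin {R A : Type*} [CommSemiring R] [Semiring A] [Algebra R A] {p : R[X]}
    {m : ℕ} (hp : p.natDegree < m) (x : A) :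
    aeval x p = ∑ i : Fin m, p.coeff i • x ^ (i : ℕ) := by
  rw [aeval_eq_sum_range' hp, Fin.sum_univ_eq_sum_range (fun i => p.coeff i • x ^ i)]

theorem star_aeval {R : Type*} [Semiring R] [StarRing R] [Algebra ℂ R] [StarModule ℂ R]
    (u : R) (p : ℂ[X]) : star (aeval u p) = aeval (star u) (p.map (starRingEnd ℂ)) := by
  induction p using Polynomial.induction_on' with
  | add p q hp hq => simp [hp, hq]
  | monomial n a => simp [aeval_monomial, ← Algebra.smul_def, star_pow]

end Polynomial

namespace Complex

theorem conj_mul_self_of_norm_eq_one {z : ℂ} (hz : ‖z‖ = 1) : conj z * z = 1 := by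
  rw [conj_mul', hz]; simp

theorem conj_mul_pow_pred {m : ℕ} (hm : 0 < m) {τ x : ℂ} (hτ : ‖τ‖ = 1) (hx : x ^ m = τ) :
    conj τ * x ^ (m - 1) = conj x := by
  have hx1 : ‖x‖ = 1 := by
    rwa [← pow_eq_one_iff_of_nonneg (norm_nonneg x) hm.ne', ← norm_pow, hx]
  obtain ⟨k, rfl⟩ := Nat.exists_eq_succ_of_ne_zero hm.ne'
  rw [← hx, map_pow, Nat.succ_sub_one, pow_succ', mul_assoc, ← mul_pow,
    conj_mul_self_of_norm_eq_one hx1, one_pow, mul_one]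

end Complex

section PowEqSmulOne

variable {R : Type*} [Ring R] [Algebra ℂ R] {m : ℕ} {τ : ℂ} {u : R}

theorem minpoly_dvd_X_pow_sub_C (hum : u ^ m = τ • 1) : minpoly ℂ u ∣ X ^ m - C τ :=
  minpoly.dvd ℂ u (by rw [map_sub, aeval_X_pow, aeval_C, hum, Algebra.algebraMap_eq_smul_one,
    sub_self])

theorem pow_eq_of_mem_roots_minpoly (hum : u ^ m = τ • 1) {x : ℂ}
    (hx : x ∈ (minpoly ℂ u).roots) : x ^ m = τ := by
  have := (isRoot_of_mem_roots hx).dvd (minpoly_dvd_X_pow_sub_C hum)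
  simpa [sub_eq_zero] using this

theorem aeval_eq_zero_iff_forall_isRoot (hm : 0 < m) (hτ : τ ≠ 0) (hum : u ^ m = τ • 1)
    (q : ℂ[X]) : aeval u q = 0 ↔ ∀ x ∈ (minpoly ℂ u).roots, q.IsRoot x := by
  have hsep : (minpoly ℂ u).Separable :=
    (separable_X_pow_sub_C τ (by exact_mod_cast hm.ne') hτ).of_dvd (minpoly_dvd_X_pow_sub_C hum)
  rw [← minpoly.dvd_iff, hsep.dvd_iff_forall_isRoot]

variable [StarRing R]

theorem star_eq_smul_pow_pred_of_mem_unitary (hu : u ∈ unitary R) (hm : 0 < m)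
    (hτ : ‖τ‖ = 1) (hum : u ^ m = τ • 1) : star u = conj τ • u ^ (m - 1) := by
  obtain ⟨k, rfl⟩ := Nat.exists_eq_succ_of_ne_zero hm.ne'
  have h : τ • star u = u ^ k := by
    rw [← mul_one (star u), ← mul_smul_comm, ← hum, pow_succ', ← mul_assoc,
      (Unitary.mem_iff.1 hu).1, one_mul]
  rw [Nat.succ_sub_one, ← h, smul_smul, Complex.conj_mul_self_of_norm_eq_one hτ, one_smul]

variable [StarModule ℂ R]

theorem norm_eq_one_of_mem_unitary_of_pow_eq [Nontrivial R] (hu : u ∈ unitary R)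
    (hum : u ^ m = τ • 1) : ‖τ‖ = 1 := by
  have h := (Unitary.mem_iff.1 (pow_mem hu m)).1
  rw [hum, star_smul, star_one, smul_mul_smul_comm, one_mul, Algebra.smul_def, mul_one] at h
  have h' : conj τ * τ = 1 := (algebraMap ℂ R).injective (by rw [map_one]; exact h)
  rw [Complex.conj_mul'] at h'
  exact (pow_eq_one_iff_of_nonneg (norm_nonneg τ) two_ne_zero).1 (by exact_mod_cast h')

theorem exists_aeval_eq_star_aeval (hm : 0 < m) (hτ : ‖τ‖ = 1)
    (hstar : star u = conj τ • u ^ (m - 1)) (p : ℂ[X]) :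
    ∃ q : ℂ[X], aeval u q = star (aeval u p) ∧
      ∀ x, x ^ m = τ → q.eval x = conj (p.eval x) := by
  refine ⟨(p.map (starRingEnd ℂ)).comp (C (conj τ) * X ^ (m - 1)), ?_, fun x hx => ?_⟩
  · rw [aeval_comp, star_aeval, hstar, map_mul, aeval_C, aeval_X_pow, Algebra.smul_def]
  · rw [eval_comp, eval_mul, eval_C, eval_X_pow, Complex.conj_mul_pow_pred hm hτ hx, eval_map,
      eval₂_at_apply]

theorem aeval_mem_unitary_iff (hm : 0 < m) (hτ : ‖τ‖ = 1) (hum : u ^ m = τ • 1)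
    (hstar : star u = conj τ • u ^ (m - 1)) (p : ℂ[X]) :
    aeval u p ∈ unitary R ↔ ∀ x ∈ (minpoly ℂ u).roots, ‖p.eval x‖ = 1 := by
  obtain ⟨q, hq, hq_eval⟩ := exists_aeval_eq_star_aeval hm hτ hstar p
  have hτ0 : τ ≠ 0 := norm_ne_zero_iff.1 (by rw [hτ]; exact one_ne_zero)
  have hunitary : aeval u p ∈ unitary R ↔ aeval u (q * p - 1) = 0 := by
    rw [Unitary.mem_iff, ← hq, ← map_mul, mul_comm, map_mul, ← map_mul, and_self, map_sub,
      map_one, sub_eq_zero]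
  rw [hunitary, aeval_eq_zero_iff_forall_isRoot hm hτ0 hum]
  refine forall₂_congr fun x hx => ?_
  rw [IsRoot, eval_sub, eval_mul, eval_one, hq_eval x (pow_eq_of_mem_roots_minpoly hum hx),
    sub_eq_zero, Complex.conj_mul', ← pow_eq_one_iff_of_nonneg (norm_nonneg _) two_ne_zero]
  norm_cast

end PowEqSmulOne

section TwistedShift

/-- Multiplication by `X` on `ℂ[X] ⧸ (X ^ m - C τ)` in the basis `1, X, …, X ^ (m - 1)`,
acting on row vectors. -/
def twistedShift (m : ℕ) (τ : ℂ) : Matrix (Fin m) (Fin m) ℂ :=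
  of fun k j => if ((k : ℕ) + 1) % m = j then τ ^ (((k : ℕ) + 1) / m) else 0

variable {m : ℕ} {τ : ℂ}

theorem twistedShift_pow_apply (a : ℕ) (k j : Fin m) :
    (twistedShift m τ ^ a) k j =
      if ((k : ℕ) + a) % m = j then τ ^ (((k : ℕ) + a) / m) else 0 := by
  have hm : 0 < m := k.pos
  induction a generalizing j with
  | zero => simp [one_apply, Nat.mod_eq_of_lt k.isLt, Nat.div_eq_of_lt k.isLt, Fin.ext_iff]
  | succ a ih =>
    have hsplit : (k : ℕ) + (a + 1) = ((k : ℕ) + a) % m + 1 + m * (((k : ℕ) + a) / m) := by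
      have := Nat.mod_add_div ((k : ℕ) + a) m
      omega
    rw [pow_succ, mul_apply, Finset.sum_eq_single ⟨((k : ℕ) + a) % m, Nat.mod_lt _ hm⟩]
    · rw [ih, if_pos rfl, twistedShift, of_apply, Fin.val_mk, hsplit, Nat.add_mul_mod_self_left,
        Nat.add_mul_div_left _ _ hm, pow_add]
      split_ifs <;> simp [mul_comm]
    · intro l _ hl
      rw [ih, if_neg (fun h => hl (Fin.ext h.symm)), zero_mul]
    · simp

theorem twistedShift_pow_self : twistedShift m τ ^ m = τ • 1 := by
  ext k j
  rw [twistedShift_pow_apply, Nat.add_mod_right, Nat.mod_eq_of_lt k.isLt,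
    Nat.add_div_right _ k.pos, Nat.div_eq_of_lt k.isLt, Matrix.smul_apply, one_apply]
  simp [Fin.ext_iff]

theorem twistedCirculant_eq_sum (β : Fin m → ℂ) :
    twistedCirculant m τ β = ∑ i : Fin m, β i • twistedShift m τ ^ (i : ℕ) := by
  ext k j
  have : NeZero m := NeZero.of_pos k.pos
  rw [Matrix.sum_apply, Finset.sum_eq_single (j - k)]
  · rw [Matrix.smul_apply, twistedShift_pow_apply, twistedCirculant, smul_eq_mul]
    by_cases hjk : (j : ℕ) < k
    · have hsum : (k : ℕ) + (j - k : Fin m) = j + m := by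
        rw [Fin.coe_sub_iff_lt.2 hjk]; omega
      rw [if_pos hjk, hsum, Nat.add_mod_right, Nat.mod_eq_of_lt j.isLt, if_pos rfl,
        Nat.add_div_right _ k.pos, Nat.div_eq_of_lt j.isLt, zero_add, pow_one, mul_comm]
    · have hsum : (k : ℕ) + (j - k : Fin m) = j := by
        rw [Fin.coe_sub_iff_le.2 (not_lt.1 hjk)]; omega
      rw [if_neg hjk, hsum, Nat.mod_eq_of_lt j.isLt, if_pos rfl, Nat.div_eq_of_lt j.isLt, pow_zero,
        mul_one]
  · intro i _ hi
    rw [Matrix.smul_apply, twistedShift_pow_apply, if_neg, smul_zero]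
    intro h
    exact hi (eq_sub_of_add_eq' (Fin.ext (by rw [Fin.val_add, h])))
  · simp

theorem star_twistedShift (hτ : ‖τ‖ = 1) :
    star (twistedShift m τ) = conj τ • twistedShift m τ ^ (m - 1) := by
  ext k j
  have hm : 0 < m := k.pos
  have hj : ((j : ℕ) + 1) % m = (if (j : ℕ) + 1 = m then 0 else (j : ℕ) + 1) ∧
      ((j : ℕ) + 1) / m = if (j : ℕ) + 1 = m then 1 else 0 := by
    split_ifs with h
    · rw [h, Nat.mod_self, Nat.div_self hm]; simp
    · rw [Nat.mod_eq_of_lt (by omega), Nat.div_eq_of_lt (by omega)]; simp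
  have hk : ((k : ℕ) + (m - 1)) % m = (if (k : ℕ) = 0 then m - 1 else (k : ℕ) - 1) ∧
      ((k : ℕ) + (m - 1)) / m = if (k : ℕ) = 0 then 0 else 1 := by
    split_ifs with h
    · rw [h, zero_add, Nat.mod_eq_of_lt (by omega), Nat.div_eq_of_lt (by omega)]; simp
    · rw [show (k : ℕ) + (m - 1) = k - 1 + m by omega, Nat.add_mod_right, Nat.add_div_right _ hm,
        Nat.mod_eq_of_lt (by omega), Nat.div_eq_of_lt (by omega)]; simp
  rw [star_apply, Matrix.smul_apply, twistedShift_pow_apply, twistedShift, of_apply, hj.1, hj.2,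
    hk.1, hk.2]
  clear hj hk
  split_ifs <;> first | omega | simp [Complex.conj_mul_self_of_norm_eq_one hτ]

end TwistedShift

theorem stmt10 {n m : ℕ} (hn : 1 ≤ n) (hm : 1 ≤ m) (τ : ℂ) (α : Fin m → ℂ)
    (U : Matrix (Fin n) (Fin n) ℂ)
    (hU : U * Uᴴ = 1 ∧ Uᴴ * U = 1)
    (hUm : U ^ m = τ • (1 : Matrix (Fin n) (Fin n) ℂ))
    (V : Matrix (Fin n) (Fin n) ℂ)
    (hV : V = ∑ i : Fin m, α i • U ^ (i : ℕ))
    (hVunitary : V * Vᴴ = 1 ∧ Vᴴ * V = 1) :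
    ∃ β : Fin m → ℂ,
      V = ∑ i : Fin m, β i • U ^ (i : ℕ) ∧
      twistedCirculant m τ β * (twistedCirculant m τ β)ᴴ = 1 ∧
      (twistedCirculant m τ β)ᴴ * twistedCirculant m τ β = 1 := by
  have : Nonempty (Fin n) := ⟨⟨0, hn⟩⟩
  have hUu : U ∈ unitary (Matrix (Fin n) (Fin n) ℂ) := Unitary.mem_iff.2 ⟨hU.2, hU.1⟩
  have hτ : ‖τ‖ = 1 := norm_eq_one_of_mem_unitary_of_pow_eq hUu hUm
  have hτ0 : τ ≠ 0 := norm_ne_zero_iff.1 (by rw [hτ]; exact one_ne_zero)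
  have hUstar := star_eq_smul_pow_pred_of_mem_unitary hUu hm hτ hUm
  set pα : ℂ[X] := ∑ i : Fin m, monomial i (α i)
  have hVα : V = aeval U pα := by
    simp [hV, pα, aeval_monomial, Algebra.smul_def]
  have hVu : aeval U pα ∈ unitary _ := hVα ▸ Unitary.mem_iff.2 ⟨hVunitary.2, hVunitary.1⟩
  obtain ⟨r, hr_deg, hr_eval⟩ := exists_natDegree_lt_forall_eval_eq hm τ
    (fun x => if x ∈ (minpoly ℂ U).roots then pα.eval x else 1)
  refine ⟨fun i => r.coeff i, ?_, (Unitary.mem_iff.1 ?_).symm⟩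
  · rw [← aeval_eq_sum_fin hr_deg, hVα, ← sub_eq_zero, ← map_sub,
      aeval_eq_zero_iff_forall_isRoot hm hτ0 hUm]
    intro x hx
    rw [IsRoot, eval_sub, hr_eval x (pow_eq_of_mem_roots_minpoly hUm hx), if_pos hx, sub_self]
  · rw [twistedCirculant_eq_sum, ← aeval_eq_sum_fin hr_deg,
      aeval_mem_unitary_iff hm hτ twistedShift_pow_self (star_twistedShift hτ)]
    intro x hx
    rw [hr_eval x (pow_eq_of_mem_roots_minpoly twistedShift_pow_self hx)]
    split_ifs with hxU
    · exact (aeval_mem_unitary_iff hm hτ hUm hUstar pα).1 hVu x hxU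
    · exact norm_one
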